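/- arXiv:1304.5958 — 2 statements merged into one kernel-verified Lean document; each statement's English description precedes it below -/
import Mathlib

section
/- Let μ be a finite positive Borel measure on the unit circle ∂𝔻 and let σ > −1. There exists a constant C > 0, depending only on σ, such that for every analytic function f on 𝔻, ∫_𝔻 |f'(z)|² P_μ(z) dA(z) ≤ C ∫_𝔻 ∫_𝔻 |f(z)−f(w)|² / |1−z̄w|^{4+2σ} · P_μ(z) (1−|z|²)^σ (1−|w|²)^σ dA(z) dA(w). -/
/-!
Fix `z ∈ 𝔻` and `r = (1 - |z|) / 2`. On the disc `D(z, r)` the quantities `1 - |z|²`, `1 - |w|²`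
and `|1 - z̄ w|` all lie between `r` and `6 r`, so the weight of the kernel is `≳ r⁻⁴` there.
The difference quotient `g = (f - f z) / (· - z)` is holomorphic with `g z = f' z`, and the mean
value property of `g²` on circles bounds `|f' z|²` by the average of `|g|²` over the annulus
`r / 2 < |w - z| < r`, where `|g w|² ≤ 4 r⁻² |f w - f z|²`. This gives
`|f' z|² ≤ C ∫_𝔻 |f z - f w|² (weight) dA(w)` for every `z`; multiplying by `P_μ z ≥ 0` and
integrating in `z` (Tonelli) gives the claim.
-/

open MeasureTheory

noncomputable section

/-- The Poisson integral `P_μ(z) = (1/2π) ∫_{∂𝔻} (1-|z|²)/|ζ-z|² dμ(ζ)` of a measure `μ`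
on the unit circle. -/
def poissonInt (μ : Measure ℂ) (z : ℂ) : ℝ :=
  (2 * Real.pi)⁻¹ * ∫ ζ, (1 - ‖z‖ ^ 2) / ‖ζ - z‖ ^ 2 ∂μ

open Set Real Metric ComplexConjugate

theorem DiffContOnCl.ofReal_two_pi_mul_enorm_le_lintegral_circleMap {E : Type*}
    [NormedAddCommGroup E] [NormedSpace ℂ E] [CompleteSpace E] {h : ℂ → E} {c : ℂ} {s : ℝ}
    (hs : 0 < s) (hd : DiffContOnCl ℂ h (ball c s)) :
    ENNReal.ofReal (2 * π) * ‖h c‖ₑ ≤ ∫⁻ θ in Ioo (-π) π, ‖h (circleMap c s θ)‖ₑ := by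
  have hperiodic : (fun θ => h (circleMap c s θ)).Periodic (2 * π) := fun θ => by
    simp [periodic_circleMap c s θ]
  have hmean : ∫ θ in (-π)..π, h (circleMap c s θ) = (2 * π) • h c := by
    have h0 := (abs_of_pos hs ▸ hd).circleAverage
    rw [circleAverage_def, inv_smul_eq_iff₀ two_pi_pos.ne'] at h0
    have hsh := hperiodic.intervalIntegral_add_eq (-π) 0
    rw [zero_add, show -π + 2 * π = π by ring] at hsh
    rw [hsh, ← h0]
  calc ENNReal.ofReal (2 * π) * ‖h c‖ₑ = ‖∫ θ in Ioc (-π) π, h (circleMap c s θ)‖ₑ := by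
        rw [← intervalIntegral.integral_of_le (by linarith [pi_pos]), hmean, enorm_smul,
          Real.enorm_of_nonneg two_pi_pos.le]
    _ ≤ ∫⁻ θ in Ioc (-π) π, ‖h (circleMap c s θ)‖ₑ := enorm_integral_le_lintegral_enorm _
    _ = ∫⁻ θ in Ioo (-π) π, ‖h (circleMap c s θ)‖ₑ := setLIntegral_congr Ioo_ae_eq_Ioc.symm

theorem DifferentiableOn.ofReal_mul_enorm_le_lintegral_annulus {E : Type*} [NormedAddCommGroup E]
    [NormedSpace ℂ E] [CompleteSpace E] {h : ℂ → E} {c : ℂ} {a R : ℝ} (ha : 0 ≤ a)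
    (hd : DifferentiableOn ℂ h (ball c R)) :
    ENNReal.ofReal (2 * π * a * (R - a)) * ‖h c‖ₑ ≤ ∫⁻ w in ball c R \ closedBall c a, ‖h w‖ₑ := by
  set S : Set (ℝ × ℝ) := Ioo a R ×ˢ Ioo (-π) π
  set F := (ball c R \ closedBall c a).indicator (fun w => ‖h w‖ₑ)
  have hcircle_mem : ∀ p ∈ S, circleMap c p.1 p.2 ∈ ball c R \ closedBall c a := by
    rintro ⟨s, θ⟩ ⟨hs, -⟩
    simp [dist_eq_norm, abs_of_pos (ha.trans_lt hs.1), hs.1, hs.2]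
  have hcont : ContinuousOn (fun p : ℝ × ℝ => h (circleMap c p.1 p.2)) S :=
    hd.continuousOn.comp (by fun_prop) fun p hp => (hcircle_mem p hp).1
  have hmeas : AEMeasurable (fun p : ℝ × ℝ => ENNReal.ofReal p.1 * ‖h (circleMap c p.1 p.2)‖ₑ)
      ((volume.prod volume).restrict S) :=
    (measurable_fst.ennreal_ofReal.aemeasurable).mul
      ((continuous_enorm.comp_continuousOn hcont).aemeasurable
        (measurableSet_Ioo.prod measurableSet_Ioo))
  have hradial : ∀ s ∈ Ioo a R, ENNReal.ofReal a * (ENNReal.ofReal (2 * π) * ‖h c‖ₑ)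
      ≤ ∫⁻ θ in Ioo (-π) π, ENNReal.ofReal s * ‖h (circleMap c s θ)‖ₑ := fun s hs => by
    rw [lintegral_const_mul' _ _ ENNReal.ofReal_ne_top]
    refine mul_le_mul' (ENNReal.ofReal_le_ofReal hs.1.le)
      (DiffContOnCl.ofReal_two_pi_mul_enorm_le_lintegral_circleMap (ha.trans_lt hs.1)
        (hd.diffContOnCl_ball (closedBall_subset_ball hs.2)))
  calc ENNReal.ofReal (2 * π * a * (R - a)) * ‖h c‖ₑ
      = ∫⁻ _ in Ioo a R, ENNReal.ofReal a * (ENNReal.ofReal (2 * π) * ‖h c‖ₑ) := by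
        rw [setLIntegral_const, Real.volume_Ioo, ← mul_assoc, ← ENNReal.ofReal_mul ha,
          mul_right_comm _ ‖h c‖ₑ, ← ENNReal.ofReal_mul (by positivity)]
        ring_nf
    _ ≤ ∫⁻ s in Ioo a R, ∫⁻ θ in Ioo (-π) π, ENNReal.ofReal s * ‖h (circleMap c s θ)‖ₑ :=
        setLIntegral_mono' measurableSet_Ioo hradial
    _ = ∫⁻ p in S, ENNReal.ofReal p.1 * ‖h (circleMap c p.1 p.2)‖ₑ := by
        rw [Measure.volume_eq_prod, setLIntegral_prod _ hmeas]
    _ = ∫⁻ p in S, ENNReal.ofReal p.1 • F (c + Complex.polarCoord.symm p) := by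
        refine setLIntegral_congr_fun (measurableSet_Ioo.prod measurableSet_Ioo) fun p hp => ?_
        have hpolar : c + Complex.polarCoord.symm p = circleMap c p.1 p.2 := by
          simp [circleMap, Complex.exp_mul_I]
        simp only [hpolar, smul_eq_mul, F, indicator_of_mem (hcircle_mem p hp)]
    _ ≤ ∫⁻ p in polarCoord.target, ENNReal.ofReal p.1 • F (c + Complex.polarCoord.symm p) :=
        lintegral_mono_set fun p hp => ⟨ha.trans_lt hp.1.1, hp.2⟩
    _ = ∫⁻ w in ball c R \ closedBall c a, ‖h w‖ₑ := by
        rw [Complex.lintegral_comp_polarCoord_symm (fun v => F (c + v)),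
          lintegral_add_left_eq_self, lintegral_indicator
            (measurableSet_ball.diff measurableSet_closedBall)]

theorem Real.rpow_mem_Icc_of_mem_Icc_mul {r c x : ℝ} (σ : ℝ) (hr : 0 < r) (hx : x ∈ Icc r (c * r)) :
    x ^ σ ∈ Icc (min 1 (c ^ σ) * r ^ σ) (max 1 (c ^ σ) * r ^ σ) := by
  have hxr : x / r ∈ Icc 1 c := ⟨(one_le_div hr).2 hx.1, (div_le_iff₀ hr).2 hx.2⟩
  have hpos : 0 < r ^ σ := rpow_pos_of_pos hr σ
  rw [← div_mul_cancel₀ x hr.ne', mul_rpow (by linarith [hxr.1]) hr.le]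
  refine ⟨mul_le_mul_of_nonneg_right ?_ hpos.le, mul_le_mul_of_nonneg_right ?_ hpos.le⟩
  · rcases le_total 0 σ with hσ | hσ
    · exact (min_le_left _ _).trans (one_le_rpow hxr.1 hσ)
    · exact (min_le_right _ _).trans (rpow_le_rpow_of_nonpos (by linarith [hxr.1]) hxr.2 hσ)
  · rcases le_total 0 σ with hσ | hσ
    · exact (rpow_le_rpow (by linarith [hxr.1]) hxr.2 hσ).trans (le_max_right _ _)
    · exact (rpow_le_one_of_one_le_of_nonpos hxr.1 hσ).trans (le_max_left _ _)

section

variable {z w : ℂ} (hw : w ∈ ball z ((1 - ‖z‖) / 2))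
include hw

theorem one_sub_norm_sq_mem_Icc_of_mem_ball :
    1 - ‖w‖ ^ 2 ∈ Icc ((1 - ‖z‖) / 2) (6 * ((1 - ‖z‖) / 2)) := by
  rw [mem_ball, dist_eq_norm] at hw
  have h1 := norm_sub_norm_le w z
  have h2 := norm_sub_norm_le z w
  rw [norm_sub_rev] at h2
  constructor <;> nlinarith [norm_nonneg w, norm_nonneg (w - z)]

theorem norm_one_sub_conj_mul_mem_Icc_of_mem_ball :
    ‖1 - conj z * w‖ ∈ Icc ((1 - ‖z‖) / 2) (5 * ((1 - ‖z‖) / 2)) := by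
  rw [mem_ball, dist_eq_norm] at hw
  have hz : ‖z‖ < 1 := by linarith [norm_nonneg (w - z)]
  constructor
  · have h := norm_sub_norm_le (1 : ℂ) (conj z * w)
    rw [norm_one, norm_mul, Complex.norm_conj] at h
    nlinarith [norm_nonneg z, norm_nonneg w, norm_sub_norm_le w z]
  · have hsplit : (1 : ℂ) - conj z * w = (1 - ‖z‖ ^ 2 : ℝ) + conj z * (z - w) := by
      rw [Complex.ofReal_sub, Complex.ofReal_one, Complex.ofReal_pow, ← Complex.conj_mul']
      ring
    have h := norm_add_le ((1 - ‖z‖ ^ 2 : ℝ) : ℂ) (conj z * (z - w))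
    rw [← hsplit, Complex.norm_real, norm_mul, Complex.norm_conj, norm_sub_rev z w,
      Real.norm_of_nonneg (by nlinarith [norm_nonneg z])] at h
    nlinarith [norm_nonneg z, norm_nonneg (w - z)]

end

/-- `|1 - z̄ w| ^ (-(4 + 2σ))` is `|K_σ(z, w)|²` for the reproducing kernel
`K_σ(z, w) = (1 - z̄ w) ^ (-(2 + σ))` of the weighted Bergman space `A²_σ`. -/
def bergmanWeight (σ : ℝ) (z w : ℂ) : ℝ :=
  (1 - ‖z‖ ^ 2) ^ σ * (1 - ‖w‖ ^ 2) ^ σ / ‖1 - conj z * w‖ ^ (4 + 2 * σ)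

theorem exists_pos_le_pow_four_mul_bergmanWeight (σ : ℝ) :
    ∃ κ > 0, ∀ z w : ℂ, w ∈ ball z ((1 - ‖z‖) / 2) →
      κ ≤ ((1 - ‖z‖) / 2) ^ 4 * bergmanWeight σ z w := by
  set m := min 1 ((6 : ℝ) ^ σ)
  set M := max 1 ((5 : ℝ) ^ (4 + 2 * σ))
  have hm : 0 < m := lt_min one_pos (rpow_pos_of_pos (by norm_num) σ)
  have hM : 0 < M := lt_max_of_lt_left one_pos
  refine ⟨m ^ 2 / M, by positivity, fun z w hw => ?_⟩
  set r := (1 - ‖z‖) / 2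
  have hr : 0 < r := dist_nonneg.trans_lt hw
  have hz := (rpow_mem_Icc_of_mem_Icc_mul σ hr
    (one_sub_norm_sq_mem_Icc_of_mem_ball (mem_ball_self hr))).1
  have hw' := (rpow_mem_Icc_of_mem_Icc_mul σ hr (one_sub_norm_sq_mem_Icc_of_mem_ball hw)).1
  have hD := norm_one_sub_conj_mul_mem_Icc_of_mem_ball hw
  have hDe := (rpow_mem_Icc_of_mem_Icc_mul (4 + 2 * σ) hr hD).2
  have hDpos : 0 < ‖1 - conj z * w‖ ^ (4 + 2 * σ) := rpow_pos_of_pos (hr.trans_le hD.1) _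
  have hre : r ^ (4 + 2 * σ) = r ^ 4 * (r ^ σ * r ^ σ) := by
    rw [rpow_add hr, two_mul, rpow_add hr, rpow_ofNat]
  rw [bergmanWeight, ← mul_div_assoc, le_div_iff₀ hDpos, div_mul_eq_mul_div, div_le_iff₀ hM]
  have hrσ : 0 ≤ m * r ^ σ := by positivity
  calc m ^ 2 * ‖1 - conj z * w‖ ^ (4 + 2 * σ) ≤ m ^ 2 * (M * r ^ (4 + 2 * σ)) := by gcongr
    _ = r ^ 4 * ((m * r ^ σ) * (m * r ^ σ)) * M := by rw [hre]; ring
    _ ≤ r ^ 4 * ((1 - ‖z‖ ^ 2) ^ σ * (1 - ‖w‖ ^ 2) ^ σ) * M := by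
      gcongr
      exact hrσ.trans hz

theorem ofReal_mul_norm_deriv_sq_le_lintegral_ball {f : ℂ → ℂ} {c : ℂ} {r : ℝ}
    (hr : 0 < r) (hf : DifferentiableOn ℂ f (ball c r)) :
    ENNReal.ofReal (π * r ^ 4 / 8) * ENNReal.ofReal (‖deriv f c‖ ^ 2)
      ≤ ∫⁻ w in ball c r, ENNReal.ofReal (‖f w - f c‖ ^ 2) := by
  set g := dslope f c with hg_def
  have hg : DifferentiableOn ℂ g (ball c r) :=
    (Complex.differentiableOn_dslope (ball_mem_nhds c hr)).2 hf
  have hmean := DifferentiableOn.ofReal_mul_enorm_le_lintegral_annulus (h := fun w => g w ^ 2)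
    (a := r / 2) (by positivity) (hg.pow 2)
  have hcenter : ‖g c ^ 2‖ₑ = ENNReal.ofReal (‖deriv f c‖ ^ 2) := by
    rw [hg_def, dslope_same, ← ofReal_norm, norm_pow]
  have hquot : ∀ w ∈ ball c r \ closedBall c (r / 2),
      ‖g w ^ 2‖ₑ * ENNReal.ofReal (r ^ 2 / 4) ≤ ENNReal.ofReal (‖f w - f c‖ ^ 2) := by
    rintro w ⟨-, hw⟩
    have hwc : r / 2 < ‖w - c‖ := by simpa [dist_eq_norm] using hw
    have hne : w ≠ c := by rintro rfl; simp at hwc; linarith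
    rw [← ofReal_norm, ← ENNReal.ofReal_mul (by positivity), norm_pow, hg_def,
      dslope_of_ne f hne, slope_def_module, norm_smul, norm_inv]
    refine ENNReal.ofReal_le_ofReal ?_
    calc (‖w - c‖⁻¹ * ‖f w - f c‖) ^ 2 * (r ^ 2 / 4)
        ≤ ((r / 2)⁻¹ * ‖f w - f c‖) ^ 2 * (r ^ 2 / 4) := by gcongr
      _ = ‖f w - f c‖ ^ 2 := by field_simp; ring
  calc ENNReal.ofReal (π * r ^ 4 / 8) * ENNReal.ofReal (‖deriv f c‖ ^ 2)
      = ENNReal.ofReal (2 * π * (r / 2) * (r - r / 2)) * ‖g c ^ 2‖ₑ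
          * ENNReal.ofReal (r ^ 2 / 4) := by
        rw [hcenter, mul_right_comm,
          ← ENNReal.ofReal_mul (p := 2 * π * (r / 2) * (r - r / 2))
            (mul_nonneg (by positivity) (by linarith))]
        congr 2
        ring
    _ ≤ (∫⁻ w in ball c r \ closedBall c (r / 2), ‖g w ^ 2‖ₑ) * ENNReal.ofReal (r ^ 2 / 4) := by
        gcongr
    _ ≤ ∫⁻ w in ball c r \ closedBall c (r / 2), ENNReal.ofReal (‖f w - f c‖ ^ 2) := by
        rw [← lintegral_mul_const' _ _ ENNReal.ofReal_ne_top]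
        exact setLIntegral_mono' (measurableSet_ball.diff measurableSet_closedBall) hquot
    _ ≤ ∫⁻ w in ball c r, ENNReal.ofReal (‖f w - f c‖ ^ 2) := lintegral_mono_set sdiff_subset

theorem exists_pos_norm_deriv_sq_le_lintegral_bergmanWeight (σ : ℝ) :
    ∃ C > 0, ∀ f : ℂ → ℂ, DifferentiableOn ℂ f (ball 0 1) → ∀ z ∈ ball (0 : ℂ) 1,
      ENNReal.ofReal (‖deriv f z‖ ^ 2) ≤ ENNReal.ofReal C *
        ∫⁻ w in ball 0 1, ENNReal.ofReal (‖f z - f w‖ ^ 2 * bergmanWeight σ z w) := by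
  obtain ⟨κ, hκ, hweight⟩ := exists_pos_le_pow_four_mul_bergmanWeight σ
  refine ⟨8 / (π * κ), by positivity, fun f hf z hz => ?_⟩
  rw [mem_ball_zero_iff] at hz
  set r := (1 - ‖z‖) / 2 with hr_def
  have hr : 0 < r := by linarith
  have hsub : ball z r ⊆ ball 0 1 := ball_subset_ball' (by rw [dist_zero_right]; linarith)
  have hosc : ∀ w ∈ ball z r, ENNReal.ofReal (‖f w - f z‖ ^ 2)
      ≤ ENNReal.ofReal (r ^ 4 / κ) * ENNReal.ofReal (‖f z - f w‖ ^ 2 * bergmanWeight σ z w) :=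
    fun w hw => by
      rw [← ENNReal.ofReal_mul (by positivity), norm_sub_rev]
      refine ENNReal.ofReal_le_ofReal ?_
      rw [div_mul_eq_mul_div, le_div_iff₀ hκ]
      calc ‖f z - f w‖ ^ 2 * κ ≤ ‖f z - f w‖ ^ 2 * (r ^ 4 * bergmanWeight σ z w) :=
            mul_le_mul_of_nonneg_left (hweight z w hw) (sq_nonneg _)
        _ = r ^ 4 * (‖f z - f w‖ ^ 2 * bergmanWeight σ z w) := by ring
  refine (ENNReal.mul_le_mul_iff_right (a := ENNReal.ofReal (π * r ^ 4 / 8)) (by positivity)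
    ENNReal.ofReal_ne_top).1 ?_
  calc ENNReal.ofReal (π * r ^ 4 / 8) * ENNReal.ofReal (‖deriv f z‖ ^ 2)
      ≤ ∫⁻ w in ball z r, ENNReal.ofReal (‖f w - f z‖ ^ 2) :=
        ofReal_mul_norm_deriv_sq_le_lintegral_ball hr (hf.mono hsub)
    _ ≤ ∫⁻ w in ball z r, ENNReal.ofReal (r ^ 4 / κ)
          * ENNReal.ofReal (‖f z - f w‖ ^ 2 * bergmanWeight σ z w) :=
        setLIntegral_mono' measurableSet_ball hosc
    _ ≤ ENNReal.ofReal (r ^ 4 / κ)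
          * ∫⁻ w in ball 0 1, ENNReal.ofReal (‖f z - f w‖ ^ 2 * bergmanWeight σ z w) := by
        rw [lintegral_const_mul' _ _ ENNReal.ofReal_ne_top]
        exact mul_le_mul_right (lintegral_mono_set hsub) _
    _ = _ := by
        rw [← mul_assoc, ← ENNReal.ofReal_mul (by positivity)]
        congr 2
        field_simp

theorem poissonInt_nonneg (μ : Measure ℂ) {z : ℂ} (hz : ‖z‖ ≤ 1) : 0 ≤ poissonInt μ z :=
  mul_nonneg (by positivity) <| integral_nonneg fun ζ =>
    div_nonneg (by nlinarith [norm_nonneg z]) (by positivity)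

theorem measurable_poissonInt (μ : Measure ℂ) [SFinite μ] : Measurable (poissonInt μ) :=
  measurable_const.mul <| StronglyMeasurable.measurable <|
    StronglyMeasurable.integral_prod_right'
      (f := fun q : ℂ × ℂ => (1 - ‖q.1‖ ^ 2) / ‖q.2 - q.1‖ ^ 2)
      (by fun_prop : Measurable _).stronglyMeasurable

theorem continuousOn_bergmanWeight (σ : ℝ) :
    ContinuousOn (fun p : ℂ × ℂ => bergmanWeight σ p.1 p.2) (ball 0 1 ×ˢ ball 0 1) := by
  have hweight : ∀ x : ℂ, x ∈ ball (0 : ℂ) 1 → 1 - ‖x‖ ^ 2 ≠ 0 := fun x hx => by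
    rw [mem_ball_zero_iff] at hx; nlinarith [norm_nonneg x]
  have hkernel : ∀ p ∈ ball (0 : ℂ) 1 ×ˢ ball 0 1, ‖1 - conj p.1 * p.2‖ ≠ 0 := by
    rintro ⟨z, w⟩ ⟨hz, hw⟩ h
    rw [norm_eq_zero, sub_eq_zero] at h
    have := congrArg norm h
    rw [norm_one, norm_mul, Complex.norm_conj] at this
    rw [mem_ball_zero_iff] at hz hw
    nlinarith [norm_nonneg z, norm_nonneg w]
  refine ContinuousOn.div ?_ ?_ fun p hp => (rpow_pos_of_pos ((norm_nonneg _).lt_of_ne'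
    (hkernel p hp)) _).ne'
  · exact ((by fun_prop : Continuous fun p : ℂ × ℂ => 1 - ‖p.1‖ ^ 2).continuousOn.rpow_const
      fun p hp => Or.inl (hweight _ hp.1)).mul
      ((by fun_prop : Continuous fun p : ℂ × ℂ => 1 - ‖p.2‖ ^ 2).continuousOn.rpow_const
      fun p hp => Or.inl (hweight _ hp.2))
  · exact (by fun_prop : Continuous fun p : ℂ × ℂ => ‖1 - conj p.1 * p.2‖).continuousOn.rpow_const
      fun p hp => Or.inl (hkernel p hp)

theorem aemeasurable_mul_norm_sub_sq_mul_bergmanWeight (σ : ℝ) {p : ℂ → ℝ} (hp : Measurable p)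
    {f : ℂ → ℂ} (hf : ContinuousOn f (ball 0 1)) :
    AEMeasurable (Function.uncurry fun z w =>
        ENNReal.ofReal (p z * (‖f z - f w‖ ^ 2 * bergmanWeight σ z w)))
      ((volume.restrict (ball 0 1)).prod (volume.restrict (ball 0 1))) := by
  rw [Measure.prod_restrict]
  have hdiff : ContinuousOn (fun q : ℂ × ℂ => ‖f q.1 - f q.2‖ ^ 2) (ball 0 1 ×ˢ ball 0 1) :=
    ((hf.comp continuousOn_fst fun q hq => hq.1).sub
      (hf.comp continuousOn_snd fun q hq => hq.2)).norm.pow 2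
  exact ((hp.comp measurable_fst).aemeasurable.mul
    ((hdiff.mul (continuousOn_bergmanWeight σ)).aemeasurable
      (measurableSet_ball.prod measurableSet_ball))).ennreal_ofReal

theorem stmt5_general (σ : ℝ) :
    ∃ C : ℝ, 0 < C ∧
      ∀ μ : Measure ℂ, IsFiniteMeasure μ → μ ((Metric.sphere (0:ℂ) 1)ᶜ) = 0 →
      ∀ f : ℂ → ℂ, DifferentiableOn ℂ f (Metric.ball (0:ℂ) 1) →
        (∫⁻ z in Metric.ball (0:ℂ) 1,
            ENNReal.ofReal (‖deriv f z‖ ^ 2 * poissonInt μ z))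
          ≤ ENNReal.ofReal C *
            ∫⁻ w in Metric.ball (0:ℂ) 1, ∫⁻ z in Metric.ball (0:ℂ) 1,
              ENNReal.ofReal (‖f z - f w‖ ^ 2 / ‖1 - (starRingEnd ℂ) z * w‖ ^ (4 + 2 * σ)
                * (poissonInt μ z * ((1 - ‖z‖ ^ 2) ^ σ * (1 - ‖w‖ ^ 2) ^ σ))) := by
  obtain ⟨C, hC, hderiv⟩ := exists_pos_norm_deriv_sq_le_lintegral_bergmanWeight σ
  refine ⟨C, hC, fun μ _ _ f hf => ?_⟩
  set K := fun z w => ENNReal.ofReal (poissonInt μ z * (‖f z - f w‖ ^ 2 * bergmanWeight σ z w))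
  have hpointwise : ∀ z ∈ ball (0 : ℂ) 1, ENNReal.ofReal (‖deriv f z‖ ^ 2 * poissonInt μ z)
      ≤ ENNReal.ofReal C * ∫⁻ w in ball 0 1, K z w := fun z hz => by
    have hP := poissonInt_nonneg μ (mem_ball_zero_iff.1 hz).le
    simp only [K, mul_comm (‖deriv f z‖ ^ 2), ENNReal.ofReal_mul hP,
      lintegral_const_mul' _ _ ENNReal.ofReal_ne_top]
    rw [mul_left_comm]
    exact mul_le_mul_right (hderiv f hf z hz) _
  calc ∫⁻ z in ball 0 1, ENNReal.ofReal (‖deriv f z‖ ^ 2 * poissonInt μ z)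
      ≤ ∫⁻ z in ball 0 1, ENNReal.ofReal C * ∫⁻ w in ball 0 1, K z w :=
        setLIntegral_mono' measurableSet_ball hpointwise
    _ = ENNReal.ofReal C * ∫⁻ w in ball 0 1, ∫⁻ z in ball 0 1, K z w := by
        rw [lintegral_const_mul' _ _ ENNReal.ofReal_ne_top, lintegral_lintegral_swap
          (aemeasurable_mul_norm_sub_sq_mul_bergmanWeight σ (measurable_poissonInt μ)
            hf.continuousOn)]
    _ = _ := by
        congr 1
        refine lintegral_congr fun w => lintegral_congr fun z => ?_
        simp only [K, bergmanWeight]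
        ring_nf

theorem stmt5 (σ : ℝ) (hσ : -1 < σ) :
    ∃ C : ℝ, 0 < C ∧
      ∀ μ : Measure ℂ, IsFiniteMeasure μ → μ ((Metric.sphere (0:ℂ) 1)ᶜ) = 0 →
      ∀ f : ℂ → ℂ, DifferentiableOn ℂ f (Metric.ball (0:ℂ) 1) →
        (∫⁻ z in Metric.ball (0:ℂ) 1,
            ENNReal.ofReal (‖deriv f z‖ ^ 2 * poissonInt μ z))
          ≤ ENNReal.ofReal C *
            ∫⁻ w in Metric.ball (0:ℂ) 1, ∫⁻ z in Metric.ball (0:ℂ) 1,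
              ENNReal.ofReal (‖f z - f w‖ ^ 2 / ‖1 - (starRingEnd ℂ) z * w‖ ^ (4 + 2 * σ)
                * (poissonInt μ z * ((1 - ‖z‖ ^ 2) ^ σ * (1 - ‖w‖ ^ 2) ^ σ))) :=
  stmt5_general σ
end
end

section
/- Let b > 0. There exists a constant C > 0, independent of η and z₀, such that for every z₀ ∈ 𝔻, every 0 < η ≤ 1, every w ∈ 𝔻 and every z in the Bergman ball B(z₀, η), one has |k_w(z) − k_w(z₀)| ≤ C η |k_w(z)|, where k_w(z) = (1−|z|²)^{b−1} / (1−z̄w)^{b+1}. -/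
/-!
On the Bergman ball `B(z₀, η)` with `η ≤ 1` the pseudo-hyperbolic distance `|φ_{z₀}(z)|` is at
most `3η/2` (and at most `1/2`), which forces `|z - z₀| ≤ 3η (1 - |z|²)` and
`|z - z₀| ≤ 3η (1 - |z₀|²)`. Write `k_w(z) = exp E(z)` with
`E(z) = (b - 1) log (1 - |z|²) - (b + 1) Log (1 - z̄w)`. Both arguments of the logarithms move by
at most `O(η)` times their own real part, and `Log` is `1/r`-Lipschitz on `{Re ≥ r}`, so
`|E(z₀) - E(z)| ≤ Kη`; then `|e^v - 1| ≤ |v| e^{|v|}` gives the claim with `C = K e^K`.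
-/

open MeasureTheory

noncomputable section

/-- The Möbius transformation `φ_z(w) = (z - w)/(1 - z̄w)`. -/
def moebius (z w : ℂ) : ℂ := (z - w) / (1 - (starRingEnd ℂ) z * w)

/-- The Bergman metric `d(z,w) = log((1+|φ_z(w)|)/(1-|φ_z(w)|))`. -/
def bdist (z w : ℂ) : ℝ := Real.log ((1 + ‖moebius z w‖) / (1 - ‖moebius z w‖))

/-- The Bergman ball `B(z,r) = {w ∈ 𝔻 : d(z,w) < r}`. -/
def bball (z : ℂ) (r : ℝ) : Set ℂ := {w : ℂ | w ∈ Metric.ball (0:ℂ) 1 ∧ bdist z w < r}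

/-- The kernel `k_w(z) = (1-|z|²)^{b-1} / (1-z̄w)^{b+1}`. -/
def kernK (b : ℝ) (w z : ℂ) : ℂ :=
  (((1 - ‖z‖ ^ 2) ^ (b - 1) : ℝ) : ℂ) / (1 - (starRingEnd ℂ) z * w) ^ ((b : ℂ) + 1)

open ComplexConjugate

namespace Complex

lemma norm_exp_sub_one_le_norm_mul_exp (x : ℂ) : ‖exp x - 1‖ ≤ ‖x‖ * Real.exp ‖x‖ := by
  simpa using norm_exp_sub_sum_le_norm_mul_exp x 1

lemma norm_log_sub_log_le_div {x y : ℂ} {r : ℝ} (hr : 0 < r) (hx : r ≤ x.re) (hy : r ≤ y.re) :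
    ‖log x - log y‖ ≤ ‖x - y‖ / r := by
  have hderiv : ∀ u ∈ {c : ℂ | r ≤ c.re}, HasDerivWithinAt log u⁻¹ {c | r ≤ c.re} u :=
    fun u hu => (hasDerivAt_log (Or.inl (hr.trans_le hu))).hasDerivWithinAt
  have hbound : ∀ u ∈ {c : ℂ | r ≤ c.re}, ‖u⁻¹‖ ≤ r⁻¹ := fun u hu => by
    rw [norm_inv]
    exact inv_anti₀ hr (hu.trans (re_le_norm u))
  simpa [div_eq_inv_mul] using
    (convex_halfSpace_re_ge r).norm_image_sub_le_of_norm_hasDerivWithin_le hderiv hbound hy hx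

lemma norm_log_sub_log_le {x y : ℂ} {c : ℝ} (hx : 0 < x.re) (hy : 0 < y.re)
    (hcx : ‖x - y‖ ≤ c * x.re) (hcy : ‖x - y‖ ≤ c * y.re) : ‖log x - log y‖ ≤ c := by
  rcases le_total x.re y.re with h | h
  · exact (norm_log_sub_log_le_div hx le_rfl h).trans ((div_le_iff₀ hx).2 hcx)
  · exact (norm_log_sub_log_le_div hy h le_rfl).trans ((div_le_iff₀ hy).2 hcy)

end Complex

open Complex

lemma one_sub_norm_le_re_one_sub_conj_mul {z w : ℂ} (hw : ‖w‖ ≤ 1) :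
    1 - ‖z‖ ≤ (1 - conj z * w).re := by
  have : (conj z * w).re ≤ ‖z‖ := calc
    (conj z * w).re ≤ ‖conj z * w‖ := re_le_norm _
    _ = ‖z‖ * ‖w‖ := by rw [norm_mul, norm_conj]
    _ ≤ ‖z‖ := mul_le_of_le_one_right (norm_nonneg z) hw
  rw [sub_re, one_re]
  linarith

lemma one_sub_conj_mul_ne_zero {z w : ℂ} (hz : ‖z‖ < 1) (hw : ‖w‖ ≤ 1) :
    1 - conj z * w ≠ 0 := fun h => by
  have := one_sub_norm_le_re_one_sub_conj_mul (z := z) hw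
  rw [h, zero_re] at this
  linarith

lemma norm_one_sub_conj_mul_comm (z w : ℂ) : ‖1 - conj z * w‖ = ‖1 - conj w * z‖ := by
  rw [← norm_conj, map_sub, map_one, map_mul, conj_conj, mul_comm]

lemma norm_one_sub_conj_mul_le {z : ℂ} (w : ℂ) (hz : ‖z‖ ≤ 1) :
    ‖1 - conj z * w‖ ≤ (1 - ‖z‖ ^ 2) + ‖z - w‖ := by
  have hdec : 1 - conj z * w = ((1 - ‖z‖ ^ 2 : ℝ) : ℂ) + conj z * (z - w) := by
    push_cast
    rw [mul_sub, conj_mul']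
    ring
  have hs : 0 ≤ 1 - ‖z‖ ^ 2 := by nlinarith [norm_nonneg z]
  calc ‖1 - conj z * w‖ ≤ ‖((1 - ‖z‖ ^ 2 : ℝ) : ℂ)‖ + ‖conj z * (z - w)‖ :=
        hdec ▸ norm_add_le _ _
    _ = (1 - ‖z‖ ^ 2) + ‖z‖ * ‖z - w‖ := by
        rw [norm_real, Real.norm_of_nonneg hs, norm_mul, norm_conj]
    _ ≤ (1 - ‖z‖ ^ 2) + ‖z - w‖ := by gcongr; exact mul_le_of_le_one_left (norm_nonneg _) hz

lemma normSq_one_sub_conj_mul (z w : ℂ) :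
    normSq (1 - conj z * w) = normSq (z - w) + (1 - normSq z) * (1 - normSq w) := by
  simp only [normSq_apply, mul_re, mul_im, sub_re, sub_im, one_re, one_im, conj_re, conj_im]
  ring

lemma norm_moebius_comm (z w : ℂ) : ‖moebius z w‖ = ‖moebius w z‖ := by
  rw [moebius, moebius, norm_div, norm_div, norm_sub_rev, norm_one_sub_conj_mul_comm]

lemma norm_moebius_lt_one {z w : ℂ} (hz : ‖z‖ < 1) (hw : ‖w‖ < 1) : ‖moebius z w‖ < 1 := by
  rw [moebius, norm_div, div_lt_one (norm_pos_iff.2 (one_sub_conj_mul_ne_zero hz hw.le))]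
  refine lt_of_pow_lt_pow_left₀ 2 (norm_nonneg _) ?_
  rw [Complex.sq_norm, Complex.sq_norm, normSq_one_sub_conj_mul]
  simp only [← Complex.sq_norm]
  have : 0 < (1 - ‖z‖ ^ 2) * (1 - ‖w‖ ^ 2) :=
    mul_pos (by nlinarith [norm_nonneg z]) (by nlinarith [norm_nonneg w])
  linarith

lemma norm_moebius_le_of_bdist_lt {z w : ℂ} {η : ℝ} (hz : ‖z‖ < 1) (hw : ‖w‖ < 1) (hη : η ≤ 1)
    (h : bdist z w < η) : ‖moebius z w‖ ≤ 1 / 2 ∧ ‖moebius z w‖ ≤ 3 / 2 * η := by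
  set ρ := ‖moebius z w‖
  have hρ0 : 0 ≤ ρ := norm_nonneg _
  have hρ1 : ρ < 1 := norm_moebius_lt_one hz hw
  have hlt : 1 + ρ < Real.exp η * (1 - ρ) := by
    rw [← div_lt_iff₀ (by linarith), ← Real.exp_log (by positivity : 0 < (1 + ρ) / (1 - ρ))]
    exact Real.exp_lt_exp.2 h
  have hexp_le : Real.exp η ≤ 3 :=
    (Real.exp_le_exp.2 hη).trans (Real.exp_one_lt_d9.le.trans (by norm_num))
  -- from `1 - η ≤ e^{-η}`
  have hexp_sub : Real.exp η - 1 ≤ η * Real.exp η := by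
    have := Real.add_one_le_exp (-η)
    rw [Real.exp_neg] at this
    nlinarith [mul_inv_cancel₀ (Real.exp_pos η).ne', Real.exp_pos η]
  constructor <;> nlinarith

lemma norm_sub_le_of_norm_moebius_le_half {z w : ℂ} (hz : ‖z‖ < 1) (hw : ‖w‖ ≤ 1)
    (h : ‖moebius z w‖ ≤ 1 / 2) : ‖z - w‖ ≤ 2 * ‖moebius z w‖ * (1 - ‖z‖ ^ 2) := by
  have hnum : ‖z - w‖ = ‖moebius z w‖ * ‖1 - conj z * w‖ := by
    rw [moebius, norm_div, div_mul_cancel₀ _ (norm_ne_zero_iff.2 (one_sub_conj_mul_ne_zero hz hw))]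
  have hden :=
    mul_le_mul_of_nonneg_left (norm_one_sub_conj_mul_le w hz.le) (norm_nonneg (moebius z w))
  have := mul_le_mul_of_nonneg_right h (norm_nonneg (z - w))
  nlinarith

lemma norm_sub_le_of_mem_bball {z₀ z : ℂ} {η : ℝ} (hz₀ : ‖z₀‖ < 1) (hη : η ≤ 1)
    (hz : z ∈ bball z₀ η) :
    ‖z₀ - z‖ ≤ 3 * η * (1 - ‖z₀‖ ^ 2) ∧ ‖z₀ - z‖ ≤ 3 * η * (1 - ‖z‖ ^ 2) := by
  obtain ⟨hz', hd⟩ := hz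
  rw [mem_ball_zero_iff] at hz'
  obtain ⟨hhalf, hρ⟩ := norm_moebius_le_of_bdist_lt hz₀ hz' hη hd
  have hs₀ : 0 ≤ 1 - ‖z₀‖ ^ 2 := by nlinarith [norm_nonneg z₀]
  have hs : 0 ≤ 1 - ‖z‖ ^ 2 := by nlinarith [norm_nonneg z]
  constructor
  · calc ‖z₀ - z‖ ≤ 2 * ‖moebius z₀ z‖ * (1 - ‖z₀‖ ^ 2) :=
          norm_sub_le_of_norm_moebius_le_half hz₀ hz'.le hhalf
      _ ≤ 3 * η * (1 - ‖z₀‖ ^ 2) := by gcongr ?_ * _; linarith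
  · rw [norm_moebius_comm] at hhalf hρ
    calc ‖z₀ - z‖ = ‖z - z₀‖ := norm_sub_rev _ _
      _ ≤ 2 * ‖moebius z z₀‖ * (1 - ‖z‖ ^ 2) :=
          norm_sub_le_of_norm_moebius_le_half hz' hz₀.le hhalf
      _ ≤ 3 * η * (1 - ‖z‖ ^ 2) := by gcongr ?_ * _; linarith

def kernExponent (b : ℝ) (w z : ℂ) : ℂ :=
  log (1 - ‖z‖ ^ 2 : ℝ) * (b - 1) - log (1 - conj z * w) * (b + 1)

lemma kernK_eq_exp_kernExponent (b : ℝ) {w z : ℂ} (hz : ‖z‖ < 1) (hw : ‖w‖ ≤ 1) :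
    kernK b w z = exp (kernExponent b w z) := by
  have hs : (0 : ℝ) < 1 - ‖z‖ ^ 2 := by nlinarith [norm_nonneg z]
  rw [kernK, kernExponent, ofReal_cpow hs.le, cpow_def_of_ne_zero (ofReal_ne_zero.2 hs.ne'),
    cpow_def_of_ne_zero (one_sub_conj_mul_ne_zero hz hw), exp_sub]
  push_cast
  rfl

lemma norm_log_one_sub_sq_sub_le {z₀ z : ℂ} {c : ℝ} (hz₀ : ‖z₀‖ < 1) (hz : ‖z‖ < 1)
    (h₀ : ‖z₀ - z‖ ≤ c * (1 - ‖z₀‖ ^ 2)) (h : ‖z₀ - z‖ ≤ c * (1 - ‖z‖ ^ 2)) :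
    ‖log (1 - ‖z₀‖ ^ 2 : ℝ) - log (1 - ‖z‖ ^ 2 : ℝ)‖ ≤ 2 * c := by
  have hdiff : |(1 - ‖z₀‖ ^ 2) - (1 - ‖z‖ ^ 2)| ≤ 2 * ‖z₀ - z‖ := by
    rw [show (1 - ‖z₀‖ ^ 2) - (1 - ‖z‖ ^ 2) = (‖z‖ - ‖z₀‖) * (‖z‖ + ‖z₀‖) by ring, abs_mul,
      abs_of_nonneg (by positivity : 0 ≤ ‖z‖ + ‖z₀‖), mul_comm 2, norm_sub_rev]
    exact mul_le_mul (abs_norm_sub_norm_le z z₀) (by linarith) (by positivity) (norm_nonneg _)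
  apply norm_log_sub_log_le <;>
    simp only [ofReal_re, ← ofReal_sub, norm_real, Real.norm_eq_abs] <;>
    nlinarith [norm_nonneg z, norm_nonneg z₀]

lemma norm_log_one_sub_conj_mul_sub_le {z₀ z w : ℂ} {c : ℝ} (hz₀ : ‖z₀‖ < 1) (hz : ‖z‖ < 1)
    (hw : ‖w‖ ≤ 1) (h₀ : ‖z₀ - z‖ ≤ c * (1 - ‖z₀‖ ^ 2)) (h : ‖z₀ - z‖ ≤ c * (1 - ‖z‖ ^ 2)) :
    ‖log (1 - conj z₀ * w) - log (1 - conj z * w)‖ ≤ 2 * c := by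
  have hdiff : ‖(1 - conj z₀ * w) - (1 - conj z * w)‖ ≤ ‖z₀ - z‖ := by
    rw [show (1 - conj z₀ * w) - (1 - conj z * w) = conj (z - z₀) * w by
        simp only [map_sub]; ring, norm_mul, norm_conj, norm_sub_rev]
    exact mul_le_of_le_one_right (norm_nonneg _) hw
  have hs₀ : 0 < 1 - ‖z₀‖ ^ 2 := by nlinarith [norm_nonneg z₀]
  have hs : 0 < 1 - ‖z‖ ^ 2 := by nlinarith [norm_nonneg z]
  have hc : 0 ≤ c := nonneg_of_mul_nonneg_left ((norm_nonneg _).trans h₀) hs₀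
  -- `1 - |u|² ≤ 2 (1 - |u|) ≤ 2 Re (1 - ū w)`
  have hre (u : ℂ) (hu : ‖u‖ < 1) : c * (1 - ‖u‖ ^ 2) ≤ 2 * c * (1 - conj u * w).re := by
    have := mul_le_mul_of_nonneg_left (one_sub_norm_le_re_one_sub_conj_mul (z := u) hw)
      (by positivity : 0 ≤ 2 * c)
    nlinarith [mul_nonneg hc (sq_nonneg (1 - ‖u‖))]
  have hre_pos (u : ℂ) (hu : ‖u‖ < 1) : 0 < (1 - conj u * w).re :=
    (sub_pos.2 hu).trans_le (one_sub_norm_le_re_one_sub_conj_mul hw)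
  exact norm_log_sub_log_le (hre_pos z₀ hz₀) (hre_pos z hz)
    (hdiff.trans (h₀.trans (hre z₀ hz₀))) (hdiff.trans (h.trans (hre z hz)))

lemma norm_kernExponent_sub_le (b : ℝ) {z₀ z w : ℂ} {c : ℝ} (hz₀ : ‖z₀‖ < 1) (hz : ‖z‖ < 1)
    (hw : ‖w‖ ≤ 1) (h₀ : ‖z₀ - z‖ ≤ c * (1 - ‖z₀‖ ^ 2)) (h : ‖z₀ - z‖ ≤ c * (1 - ‖z‖ ^ 2)) :
    ‖kernExponent b w z₀ - kernExponent b w z‖ ≤ 2 * c * (|b - 1| + |b + 1|) := by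
  have hbm : ‖(b : ℂ) - 1‖ = |b - 1| := by
    rw [← ofReal_one, ← ofReal_sub, norm_real, Real.norm_eq_abs]
  have hbp : ‖(b : ℂ) + 1‖ = |b + 1| := by
    rw [← ofReal_one, ← ofReal_add, norm_real, Real.norm_eq_abs]
  calc ‖kernExponent b w z₀ - kernExponent b w z‖
      = ‖(log (1 - ‖z₀‖ ^ 2 : ℝ) - log (1 - ‖z‖ ^ 2 : ℝ)) * (b - 1)
          - (log (1 - conj z₀ * w) - log (1 - conj z * w)) * (b + 1)‖ := by
        rw [kernExponent, kernExponent]; ring_nf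
    _ ≤ 2 * c * |b - 1| + 2 * c * |b + 1| := by
        refine (norm_sub_le _ _).trans (add_le_add ?_ ?_) <;> rw [norm_mul]
        · rw [hbm]
          exact mul_le_mul_of_nonneg_right (norm_log_one_sub_sq_sub_le hz₀ hz h₀ h) (abs_nonneg _)
        · rw [hbp]
          exact mul_le_mul_of_nonneg_right
            (norm_log_one_sub_conj_mul_sub_le hz₀ hz hw h₀ h) (abs_nonneg _)
    _ = 2 * c * (|b - 1| + |b + 1|) := by ring

theorem stmt13_general (b : ℝ) :
    ∃ C : ℝ, 0 < C ∧
      ∀ z₀ ∈ Metric.ball (0:ℂ) 1, ∀ η : ℝ, 0 < η → η ≤ 1 →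
      ∀ w ∈ Metric.ball (0:ℂ) 1, ∀ z ∈ bball z₀ η,
        ‖kernK b w z - kernK b w z₀‖ ≤ C * η * ‖kernK b w z‖ := by
  set K := 6 * (|b - 1| + |b + 1|)
  have hK : 0 < K := by linarith [neg_abs_le (b - 1), le_abs_self (b + 1)]
  refine ⟨K * Real.exp K, by positivity, ?_⟩
  intro z₀ hz₀ η _ hη1 w hw z hz
  rw [mem_ball_zero_iff] at hz₀ hw
  have hz' : ‖z‖ < 1 := mem_ball_zero_iff.1 hz.1
  obtain ⟨h₀, h⟩ := norm_sub_le_of_mem_bball hz₀ hη1 hz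
  set v := kernExponent b w z₀ - kernExponent b w z
  have hv : ‖v‖ ≤ K * η := by
    have := norm_kernExponent_sub_le b hz₀ hz' hw.le h₀ h
    linarith
  have hk : kernK b w z₀ = kernK b w z * exp v := by
    rw [kernK_eq_exp_kernExponent b hz₀ hw.le, kernK_eq_exp_kernExponent b hz' hw.le, ← exp_add,
      add_sub_cancel]
  calc ‖kernK b w z - kernK b w z₀‖ = ‖kernK b w z‖ * ‖exp v - 1‖ := by
        rw [hk, ← norm_mul, ← norm_neg]; ring_nf
    _ ≤ ‖kernK b w z‖ * (‖v‖ * Real.exp ‖v‖) := by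
        gcongr; exact norm_exp_sub_one_le_norm_mul_exp v
    _ ≤ ‖kernK b w z‖ * (K * η * Real.exp K) := by gcongr; nlinarith
    _ = K * Real.exp K * η * ‖kernK b w z‖ := by ring

theorem stmt13 (b : ℝ) (hb : 0 < b) :
    ∃ C : ℝ, 0 < C ∧
      ∀ z₀ ∈ Metric.ball (0:ℂ) 1, ∀ η : ℝ, 0 < η → η ≤ 1 →
      ∀ w ∈ Metric.ball (0:ℂ) 1, ∀ z ∈ bball z₀ η,
        ‖kernK b w z - kernK b w z₀‖ ≤ C * η * ‖kernK b w z‖ :=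
  stmt13_general b
end
end
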